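/- Let G be a cubic graph and M1, M2 disjoint matchings with |M1 ∪ M2| maximum. If a component of G − M1 − M2 is a star K_{1,3}, then no edge of M1 ∪ M2 joins a leaf of this star to an internal (degree-2) vertex of a path component P4 of G − M1 − M2. -/

import Mathlib

open SimpleGraph

/-- A matching in `G` given as a set of edges: edges of `G`, pairwise vertex-disjoint. -/
def IsMatchingSet {V : Type*} (G : SimpleGraph V) (M : Set (Sym2 V)) : Prop :=
  M ⊆ G.edgeSet ∧ ∀ e ∈ M, ∀ f ∈ M, e ≠ f → ∀ v, v ∈ e → v ∉ f

/-- `M1, M2` are disjoint matchings of `G` with `|M1 ∪ M2|` maximum over all pairs of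
disjoint matchings of `G`. -/
def MaxDisjointPair {V : Type*} (G : SimpleGraph V) (M1 M2 : Set (Sym2 V)) : Prop :=
  IsMatchingSet G M1 ∧ IsMatchingSet G M2 ∧ Disjoint M1 M2 ∧
  ∀ N1 N2 : Set (Sym2 V), IsMatchingSet G N1 → IsMatchingSet G N2 → Disjoint N1 N2 →
    (N1 ∪ N2).ncard ≤ (M1 ∪ M2).ncard

/-- Adjacency in `Ĝ = G − M1 − M2`: adjacency via an edge of `G` not in `M1 ∪ M2`. -/
def hatAdj {V : Type*} (G : SimpleGraph V) (M1 M2 : Set (Sym2 V)) (x y : V) : Prop :=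
  G.Adj x y ∧ s(x, y) ∉ M1 ∪ M2

/-- The vertices `u, l 0, l 1, l 2` form a `K_{1,3}` connected component of
`Ĝ = G − M1 − M2`, with center `u` and leaves `l i`. -/
def IsK13Component {V : Type*} (G : SimpleGraph V) (M1 M2 : Set (Sym2 V))
    (u : V) (l : Fin 3 → V) : Prop :=
  Function.Injective l ∧ (∀ i, l i ≠ u) ∧ (∀ i, hatAdj G M1 M2 u (l i)) ∧
  (∀ w, hatAdj G M1 M2 u w → ∃ i, w = l i) ∧
  (∀ i w, hatAdj G M1 M2 (l i) w → w = u)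

/-- The vertices `u1 u2 u3 u4` form a path (`P4`) connected component of
`Ĝ = G − M1 − M2`. -/
def IsP4Component {V : Type*} (G : SimpleGraph V) (M1 M2 : Set (Sym2 V))
    (u1 u2 u3 u4 : V) : Prop :=
  u1 ≠ u2 ∧ u1 ≠ u3 ∧ u1 ≠ u4 ∧ u2 ≠ u3 ∧ u2 ≠ u4 ∧ u3 ≠ u4 ∧
  hatAdj G M1 M2 u1 u2 ∧ hatAdj G M1 M2 u2 u3 ∧ hatAdj G M1 M2 u3 u4 ∧
  (∀ w, hatAdj G M1 M2 u1 w → w = u2) ∧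
  (∀ w, hatAdj G M1 M2 u2 w → w = u1 ∨ w = u3) ∧
  (∀ w, hatAdj G M1 M2 u3 w → w = u2 ∨ w = u4) ∧
  (∀ w, hatAdj G M1 M2 u4 w → w = u3)


/-! If the leaf `l` of the star centred at `u` were matched to `u2` by `A`, say, then trading
`l u2` for `u l` (the centre `u` is free, its three edges being star edges) gives another
maximum pair in which `u2` is uncovered (its other two edges are path edges), while `u3`,
having two path edges, is still covered by at most one of the two matchings. The path edge
`u2 u3` can then be added to a matching that misses both ends, contradicting maximality. -/

section Matchings

variable {V : Type*} {G : SimpleGraph V} {A B M : Set (Sym2 V)}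

theorem IsMatchingSet.subset (hM : IsMatchingSet G M) (hNM : A ⊆ M) : IsMatchingSet G A :=
  ⟨hNM.trans hM.1, fun e he f hf hef => hM.2 e (hNM he) f (hNM hf) hef⟩

theorem IsMatchingSet.insert_of_free (hM : IsMatchingSet G M) {x y : V} (hxy : G.Adj x y)
    (hx : ∀ e ∈ M, x ∉ e) (hy : ∀ e ∈ M, y ∉ e) : IsMatchingSet G (insert s(x, y) M) := by
  have hfree : ∀ e ∈ M, ∀ v ∈ s(x, y), v ∉ e := by
    intro e he v hv
    rcases Sym2.mem_iff.mp hv with rfl | rfl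
    exacts [hx e he, hy e he]
  refine ⟨Set.insert_subset hxy hM.1, ?_⟩
  rintro e (rfl | he) f (rfl | hf) hef v hve hvf
  · exact hef rfl
  · exact hfree f hf v hve hvf
  · exact hfree e he v hvf hve
  · exact hM.2 e he f hf hef v hve hvf

theorem IsMatchingSet.exchange (hM : IsMatchingSet G M) {u v w : V} (hvw : s(v, w) ∈ M)
    (huv : G.Adj u v) (hu : ∀ e ∈ M, u ∉ e) :
    IsMatchingSet G (insert s(u, v) (M \ {s(v, w)})) := by
  refine (hM.subset Set.sdiff_subset).insert_of_free huv (fun e he => hu e he.1) ?_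
  rintro e ⟨he, hne⟩
  exact hM.2 _ hvw e he (Ne.symm hne) v (Sym2.mem_mk_left v w)

theorem MaxDisjointPair.symm (h : MaxDisjointPair G A B) : MaxDisjointPair G B A := by
  obtain ⟨hA, hB, hAB, hmax⟩ := h
  exact ⟨hB, hA, hAB.symm, fun N1 N2 h1 h2 h12 => Set.union_comm A B ▸ hmax N1 N2 h1 h2 h12⟩

theorem MaxDisjointPair.exchange [Finite V] (h : MaxDisjointPair G A B) {a e : Sym2 V}
    (he : e ∈ A) (ha : a ∉ A ∪ B) (hA' : IsMatchingSet G (insert a (A \ {e}))) :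
    MaxDisjointPair G (insert a (A \ {e})) B := by
  obtain ⟨hA, hB, hAB, hmax⟩ := h
  have heB : e ∉ B := Set.disjoint_left.mp hAB he
  have hunion : insert a (A \ {e}) ∪ B = insert a ((A ∪ B) \ {e}) := by
    rw [Set.insert_union, Set.union_sdiff_distrib, Set.sdiff_singleton_eq_self heB]
  have hcard : (insert a (A \ {e}) ∪ B).ncard = (A ∪ B).ncard := by
    rw [hunion, Set.ncard_insert_of_notMem (fun h => ha h.1),
      Set.ncard_sdiff_singleton_add_one (Set.mem_union_left B he)]
  refine ⟨hA', hB, ?_, fun N1 N2 h1 h2 h12 => hcard ▸ hmax N1 N2 h1 h2 h12⟩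
  rw [Set.disjoint_insert_left]
  exact ⟨fun h => ha (Or.inr h), hAB.mono_left Set.sdiff_subset⟩

theorem MaxDisjointPair.exists_mem_left_of_adj [Finite V] (h : MaxDisjointPair G A B)
    {x y : V} (hxy : G.Adj x y) (hB : s(x, y) ∉ B) (hx : ∀ e ∈ A, x ∉ e) :
    ∃ e ∈ A, y ∈ e := by
  by_contra! hy
  obtain ⟨hA, hB', hAB, hmax⟩ := h
  have hnew : s(x, y) ∉ A ∪ B := fun h => h.elim (fun hA => hx _ hA (Sym2.mem_mk_left x y)) hB
  have hle := hmax _ B (hA.insert_of_free hxy hx hy) hB'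
    (Set.disjoint_insert_left.mpr ⟨hB, hAB⟩)
  rw [Set.insert_union, Set.ncard_insert_of_notMem hnew] at hle
  omega

end Matchings

section CubicVertices

variable {V : Type*} {G : SimpleGraph V} {A B : Set (Sym2 V)}

theorem hatAdj.symm {x y : V} (h : hatAdj G A B x y) : hatAdj G A B y x :=
  ⟨h.1.symm, Sym2.eq_swap ▸ h.2⟩

theorem hatAdj_comm {x y : V} : hatAdj G A B x y ↔ hatAdj G B A x y := by
  rw [hatAdj, hatAdj, Set.union_comm]

variable [Fintype V] [DecidableRel G.Adj] {v : V}

theorem SimpleGraph.eq_or_eq_or_eq_of_degree_eq_three (hdeg : G.degree v = 3) {a b c w : V}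
    (ha : G.Adj v a) (hb : G.Adj v b) (hc : G.Adj v c)
    (hab : a ≠ b) (hac : a ≠ c) (hbc : b ≠ c) (hw : G.Adj v w) : w = a ∨ w = b ∨ w = c := by
  classical
  have hsub : ({a, b, c} : Finset V) ⊆ G.neighborFinset v := by
    intro x hx
    simp only [Finset.mem_insert, Finset.mem_singleton] at hx
    rcases hx with rfl | rfl | rfl <;> simpa
  have hcard : ({a, b, c} : Finset V).card = 3 :=
    Finset.card_eq_three.mpr ⟨a, b, c, hab, hac, hbc, rfl⟩
  have heq := Finset.eq_of_subset_of_card_le hsub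
    (by rw [hcard, card_neighborFinset_eq_degree, hdeg])
  simpa [← heq] using (G.mem_neighborFinset v w).mpr hw

theorem eq_of_mem_of_hatAdj_of_hatAdj (hdeg : G.degree v = 3) (hS : A ∪ B ⊆ G.edgeSet)
    {x y : V} (hx : hatAdj G A B v x) (hy : hatAdj G A B v y) (hxy : x ≠ y)
    {e f : Sym2 V} (he : e ∈ A ∪ B) (hf : f ∈ A ∪ B) (hve : v ∈ e) (hvf : v ∈ f) : e = f := by
  obtain ⟨w, rfl⟩ := Sym2.mem_iff_exists.mp hve
  obtain ⟨w', rfl⟩ := Sym2.mem_iff_exists.mp hvf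
  have hxw : x ≠ w := by rintro rfl; exact hx.2 he
  have hyw : y ≠ w := by rintro rfl; exact hy.2 he
  rcases G.eq_or_eq_or_eq_of_degree_eq_three hdeg hx.1 hy.1 (hS he) hxy hxw hyw (hS hf)
    with rfl | rfl | rfl
  · exact absurd hf hx.2
  · exact absurd hf hy.2
  · rfl

theorem notMem_of_hatAdj_of_hatAdj_of_hatAdj (hdeg : G.degree v = 3)
    (hS : A ∪ B ⊆ G.edgeSet)
    {a b c : V} (ha : hatAdj G A B v a) (hb : hatAdj G A B v b) (hc : hatAdj G A B v c)
    (hab : a ≠ b) (hac : a ≠ c) (hbc : b ≠ c) : ∀ e ∈ A ∪ B, v ∉ e := by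
  intro e he hve
  obtain ⟨w, rfl⟩ := Sym2.mem_iff_exists.mp hve
  rcases G.eq_or_eq_or_eq_of_degree_eq_three hdeg ha.1 hb.1 hc.1 hab hac hbc (hS he)
    with rfl | rfl | rfl
  exacts [ha.2 he, hb.2 he, hc.2 he]

end CubicVertices

section StarPath

variable {V : Type*} [Fintype V] {G : SimpleGraph V} [DecidableRel G.Adj]
  {A B : Set (Sym2 V)} {u l u1 u2 u3 u4 : V}

theorem MaxDisjointPair.notMem_left_of_star_path (hmax : MaxDisjointPair G A B)
    (hu : ∀ e ∈ A ∪ B, u ∉ e) (hul : hatAdj G A B u l)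
    (h12 : hatAdj G A B u1 u2) (h23 : hatAdj G A B u2 u3) (h34 : hatAdj G A B u3 u4)
    (h13 : u1 ≠ u3) (h24 : u2 ≠ u4) (hdeg2 : G.degree u2 = 3) (hdeg3 : G.degree u3 = 3) :
    s(l, u2) ∉ A := by
  intro he0
  have ⟨hA, hB, hAB, _⟩ := hmax
  have hS : A ∪ B ⊆ G.edgeSet := Set.union_subset hA.1 hB.1
  have hu2 : ∀ e ∈ A ∪ B, u2 ∈ e → e = s(l, u2) := fun e he hve =>
    eq_of_mem_of_hatAdj_of_hatAdj hdeg2 hS h12.symm h23 h13 he (Or.inl he0) hve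
      (Sym2.mem_mk_right l u2)
  have huu2 : u ≠ u2 := by rintro rfl; exact hul.2 (Sym2.eq_swap ▸ Or.inl he0)
  have hlu2 : l ≠ u2 := (hS (Or.inl he0)).ne
  set A' := insert s(u, l) (A \ {s(l, u2)})
  have hmax' : MaxDisjointPair G A' B :=
    hmax.exchange he0 hul.2 (hA.exchange he0 hul.1 fun e he => hu e (Or.inl he))
  have hu2A' : ∀ e ∈ A', u2 ∉ e := by
    rintro e (rfl | ⟨he, hne⟩) hve
    · rcases Sym2.mem_iff.mp hve with h | h
      exacts [huu2 h.symm, hlu2 h.symm]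
    · exact hne (hu2 e (Or.inl he) hve)
  have hu2B : ∀ e ∈ B, u2 ∉ e := fun e he hve =>
    Set.disjoint_left.mp hAB he0 (hu2 e (Or.inr he) hve ▸ he)
  have hb : s(u2, u3) ∉ A' ∪ B := by
    rintro ((h | ⟨h, -⟩) | h)
    · exact hu2A' _ (Set.mem_insert _ _) (h ▸ Sym2.mem_mk_left u2 u3)
    exacts [h23.2 (Or.inl h), h23.2 (Or.inr h)]
  obtain ⟨e, he, hve⟩ := hmax'.exists_mem_left_of_adj h23.1 (fun h => hb (Or.inr h)) hu2A'
  obtain ⟨f, hf, hvf⟩ := hmax'.symm.exists_mem_left_of_adj h23.1 (fun h => hb (Or.inl h)) hu2B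
  rcases he with rfl | ⟨he, -⟩
  · rcases Sym2.mem_iff.mp hve with rfl | rfl
    · exact hu f (Or.inr hf) hvf
    · exact h23.2 (Sym2.eq_swap ▸ Or.inl he0)
  · have hef := eq_of_mem_of_hatAdj_of_hatAdj hdeg3 hS h23.symm h34 h24 (Or.inl he)
      (Or.inr hf) hve hvf
    exact Set.disjoint_left.mp hAB he (hef ▸ hf)

theorem MaxDisjointPair.notMem_of_star_path (hmax : MaxDisjointPair G A B)
    (hu : ∀ e ∈ A ∪ B, u ∉ e) (hul : hatAdj G A B u l)
    (h12 : hatAdj G A B u1 u2) (h23 : hatAdj G A B u2 u3) (h34 : hatAdj G A B u3 u4)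
    (h13 : u1 ≠ u3) (h24 : u2 ≠ u4) (hdeg2 : G.degree u2 = 3) (hdeg3 : G.degree u3 = 3) :
    s(l, u2) ∉ A ∪ B := by
  rintro (h | h)
  · exact hmax.notMem_left_of_star_path hu hul h12 h23 h34 h13 h24 hdeg2 hdeg3 h
  · exact hmax.symm.notMem_left_of_star_path (Set.union_comm A B ▸ hu) (hatAdj_comm.mp hul)
      (hatAdj_comm.mp h12) (hatAdj_comm.mp h23) (hatAdj_comm.mp h34) h13 h24 hdeg2 hdeg3 h

end StarPath

theorem stmt16 {V : Type*} [Fintype V] (G : SimpleGraph V) [DecidableRel G.Adj]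
    (hcubic : ∀ v : V, G.degree v = 3) (M1 M2 : Set (Sym2 V))
    (hmax : MaxDisjointPair G M1 M2)
    (u : V) (l : Fin 3 → V) (hstar : IsK13Component G M1 M2 u l)
    (u1 u2 u3 u4 : V) (hP : IsP4Component G M1 M2 u1 u2 u3 u4) :
    ∀ i : Fin 3, s(l i, u2) ∉ M1 ∪ M2 ∧ s(l i, u3) ∉ M1 ∪ M2 := by
  obtain ⟨hinj, -, hleaves, -, -⟩ := hstar
  obtain ⟨-, h13, -, -, h24, -, h12, h23, h34, -⟩ := hP
  have hu : ∀ e ∈ M1 ∪ M2, u ∉ e :=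
    notMem_of_hatAdj_of_hatAdj_of_hatAdj (hcubic u) (Set.union_subset hmax.1.1 hmax.2.1.1)
      (hleaves 0) (hleaves 1) (hleaves 2) (hinj.ne (by decide)) (hinj.ne (by decide))
      (hinj.ne (by decide))
  intro i
  exact ⟨hmax.notMem_of_star_path hu (hleaves i) h12 h23 h34 h13 h24 (hcubic u2) (hcubic u3),
    hmax.notMem_of_star_path hu (hleaves i) h34.symm h23.symm h12.symm h24.symm h13.symm
      (hcubic u3) (hcubic u2)⟩
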